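/- arXiv:1908.05726 — 2 statements merged into one kernel-verified Lean document; each statement's English description precedes it below -/
import Mathlib

section
/- Let $\tau^2 > 0$, $\sigma^2 > 0$, $\alpha > 1$, and suppose $\lambda_i^{(n)} \le C n i^{-\alpha}$ for all $1 \le i \le n$ with $C > 0$. With $b_{ni} = \lambda_i^{(n)}/(\tau^2 + \sigma^2 \lambda_i^{(n)})$, there exists $C' > 0$ such that $\sum_{i=1}^n b_{ni} \le C' n^{1/\alpha}$ and $\sum_{i=1}^n b_{ni}^2 \le C' n^{1/\alpha}$ for all $n \ge 1$. -/
/-!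
Each `bᵢ = λᵢ / (τ² + σ² λᵢ)` is at most `1 / σ²` and at most `λᵢ / τ² ≤ (C / τ²) n i^(-α)`.
Using the first bound for `i ≤ m = ⌈n^(1/α)⌉` and the second beyond, where the tail
`∑_{i > m} i^(-α) ≤ m^(1-α) / (α - 1)` is compared with an integral, gives
`∑ bᵢ ≤ (2 / σ² + C / (τ² (α - 1))) n^(1/α)`; and `bᵢ² ≤ bᵢ / σ²` handles the squares.
-/

open Finset

theorem sum_Ioc_rpow_neg_le {α : ℝ} (hα : 1 < α) {m : ℕ} (hm : 0 < m) (n : ℕ) :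
    ∑ i ∈ Ioc m n, (i : ℝ) ^ (-α) ≤ (m : ℝ) ^ (1 - α) / (α - 1) := by
  have hm' : (0 : ℝ) < m := by exact_mod_cast hm
  have anti : AntitoneOn (fun x : ℝ ↦ x ^ (-α)) (Set.Icc (m : ℝ) n) := fun x hx y _ hxy ↦
    Real.rpow_le_rpow_of_nonpos (hm'.trans_le hx.1) hxy (by linarith)
  calc ∑ i ∈ Ioc m n, (i : ℝ) ^ (-α) = ∑ i ∈ Ico m n, ((i + 1 : ℕ) : ℝ) ^ (-α) := by
        rw [← Finset.Ico_add_one_add_one_eq_Ioc, Finset.sum_Ico_add' (fun i : ℕ ↦ (i : ℝ) ^ (-α))]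
    _ ≤ ∫ x in Set.Ioi (m : ℝ), x ^ (-α) :=
        anti.sum_Ico_le_integral (integrableOn_Ioi_rpow_of_lt (by linarith) hm')
          fun t ht ↦ Real.rpow_nonneg (hm'.trans ht).le _
    _ = (m : ℝ) ^ (1 - α) / (α - 1) := by
        rw [integral_Ioi_rpow_of_lt (by linarith) hm', show -α + 1 = 1 - α by ring, neg_div,
          ← div_neg, neg_sub]

theorem sum_Icc_le_of_le_of_le_mul_rpow {α : ℝ} (hα : 1 < α) {A B : ℝ} (hB : 0 ≤ B)
    {m n : ℕ} (hm : 0 < m) (hmn : m ≤ n) {b : ℕ → ℝ} (hbA : ∀ i ∈ Icc 1 n, b i ≤ A)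
    (hbB : ∀ i ∈ Icc 1 n, b i ≤ B * (i : ℝ) ^ (-α)) :
    ∑ i ∈ Icc 1 n, b i ≤ m * A + B * ((m : ℝ) ^ (1 - α) / (α - 1)) := by
  have hIcc : Icc 1 n = Ioc 0 n := Icc_add_one_left_eq_Ioc 0 n
  rw [hIcc] at hbA hbB
  rw [hIcc, ← sum_Ioc_consecutive _ m.zero_le hmn]
  gcongr ?_ + ?_
  · calc ∑ i ∈ Ioc 0 m, b i ≤ ∑ _i ∈ Ioc 0 m, A :=
          sum_le_sum fun i hi ↦ hbA i (Ioc_subset_Ioc_right hmn hi)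
      _ = m * A := by simp
  · calc ∑ i ∈ Ioc m n, b i ≤ ∑ i ∈ Ioc m n, B * (i : ℝ) ^ (-α) :=
          sum_le_sum fun i hi ↦ hbB i (Ioc_subset_Ioc_left m.zero_le hi)
      _ ≤ B * ((m : ℝ) ^ (1 - α) / (α - 1)) := by
          rw [← mul_sum]; exact mul_le_mul_of_nonneg_left (sum_Ioc_rpow_neg_le hα hm n) hB

theorem sum_Icc_le_mul_rpow_inv {α : ℝ} (hα : 1 < α) {A B : ℝ} (hA : 0 ≤ A) (hB : 0 ≤ B)
    {n : ℕ} (hn : 1 ≤ n) {b : ℕ → ℝ} (hbA : ∀ i ∈ Icc 1 n, b i ≤ A)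
    (hbB : ∀ i ∈ Icc 1 n, b i ≤ B * n * (i : ℝ) ^ (-α)) :
    ∑ i ∈ Icc 1 n, b i ≤ (2 * A + B / (α - 1)) * (n : ℝ) ^ (1 / α) := by
  set x := (n : ℝ) ^ (1 / α)
  have hn' : (1 : ℝ) ≤ n := by exact_mod_cast hn
  have hx1 : 1 ≤ x := Real.one_le_rpow hn' (by positivity)
  have hxn : x ≤ n := Real.rpow_le_self_of_one_le hn' ((div_le_one (by positivity)).2 hα.le)
  set m := ⌈x⌉₊
  have hm : 0 < m := Nat.ceil_pos.2 (by linarith)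
  have hmn : m ≤ n := Nat.ceil_le.2 hxn
  have hm2 : (m : ℝ) ≤ 2 * x := (Nat.ceil_lt_add_one (by linarith : 0 ≤ x)).le.trans (by linarith)
  have hnm : (n : ℝ) * (m : ℝ) ^ (1 - α) ≤ x := calc
    (n : ℝ) * (m : ℝ) ^ (1 - α) ≤ n * x ^ (1 - α) := mul_le_mul_of_nonneg_left
      (Real.rpow_le_rpow_of_nonpos (by linarith) (Nat.le_ceil x) (by linarith)) (by linarith)
    _ = (n : ℝ) ^ (1 + 1 / α * (1 - α)) := by
      rw [Real.rpow_add (by linarith), Real.rpow_one, Real.rpow_mul (by linarith)]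
    _ = x := by
      congr 1
      field_simp
      ring
  calc ∑ i ∈ Icc 1 n, b i ≤ m * A + B * n * ((m : ℝ) ^ (1 - α) / (α - 1)) :=
        sum_Icc_le_of_le_of_le_mul_rpow hα (by positivity) hm hmn hbA hbB
    _ = m * A + B / (α - 1) * (n * (m : ℝ) ^ (1 - α)) := by ring
    _ ≤ 2 * x * A + B / (α - 1) * x := by gcongr
    _ = (2 * A + B / (α - 1)) * x := by ring

theorem sum_sq_le_mul_sum {ι : Type*} {s : Finset ι} {b : ι → ℝ} {A : ℝ}
    (hb0 : ∀ i ∈ s, 0 ≤ b i) (hbA : ∀ i ∈ s, b i ≤ A) :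
    ∑ i ∈ s, b i ^ 2 ≤ A * ∑ i ∈ s, b i := by
  rw [mul_sum]
  exact sum_le_sum fun i hi ↦ by
    rw [sq]; exact mul_le_mul_of_nonneg_right (hbA i hi) (hb0 i hi)

theorem div_add_mul_le_inv {τ2 σ2 x : ℝ} (hτ : 0 < τ2) (hσ : 0 < σ2) (hx : 0 ≤ x) :
    x / (τ2 + σ2 * x) ≤ 1 / σ2 := by
  rw [div_le_div_iff₀ (by positivity) hσ]
  linarith

theorem div_add_mul_le_div {τ2 σ2 x : ℝ} (hτ : 0 < τ2) (hσ : 0 ≤ σ2) (hx : 0 ≤ x) :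
    x / (τ2 + σ2 * x) ≤ x / τ2 :=
  div_le_div_of_nonneg_left hx hτ (by nlinarith)

/-- `∑ bₙᵢ ≤ C' n^(1/α)` and `∑ bₙᵢ² ≤ C' n^(1/α)` with
`bₙᵢ = λᵢ/(τ² + σ² λᵢ)`, under the eigenvalue bound `λᵢ ≤ C n i^(-α)`. -/
theorem stmt2
    (τ2 σ2 α : ℝ) (hτ : 0 < τ2) (hσ : 0 < σ2) (hα : 1 < α)
    (lam : ℕ → ℕ → ℝ)
    (hpos : ∀ n i, 1 ≤ i → i ≤ n → 0 < lam n i)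
    (C : ℝ) (hC : 0 < C)
    (hub : ∀ n i, 1 ≤ i → i ≤ n → lam n i ≤ C * n * (i : ℝ) ^ (-α)) :
    ∃ C' : ℝ, 0 < C' ∧ ∀ n : ℕ, 1 ≤ n →
      (∑ i ∈ Finset.Icc 1 n, lam n i / (τ2 + σ2 * lam n i)
        ≤ C' * (n : ℝ) ^ (1 / α)) ∧
      (∑ i ∈ Finset.Icc 1 n, (lam n i / (τ2 + σ2 * lam n i)) ^ 2
        ≤ C' * (n : ℝ) ^ (1 / α)) := by
  set K := 2 * (1 / σ2) + C / τ2 / (α - 1)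
  have hK : 0 < K := by have := sub_pos.2 hα; positivity
  refine ⟨(1 + 1 / σ2) * K, by positivity, fun n hn ↦ ?_⟩
  set b := fun i ↦ lam n i / (τ2 + σ2 * lam n i)
  have hlam : ∀ i ∈ Icc 1 n, 0 < lam n i := fun i hi ↦ hpos n i (mem_Icc.1 hi).1 (mem_Icc.1 hi).2
  have hb0 : ∀ i ∈ Icc 1 n, 0 ≤ b i := fun i hi ↦ by have := hlam i hi; positivity
  have hbσ : ∀ i ∈ Icc 1 n, b i ≤ 1 / σ2 := fun i hi ↦ div_add_mul_le_inv hτ hσ (hlam i hi).le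
  have hbC : ∀ i ∈ Icc 1 n, b i ≤ C / τ2 * n * (i : ℝ) ^ (-α) := fun i hi ↦ calc
      b i ≤ lam n i / τ2 := div_add_mul_le_div hτ hσ.le (hlam i hi).le
      _ ≤ C * n * (i : ℝ) ^ (-α) / τ2 :=
        div_le_div_of_nonneg_right (hub n i (mem_Icc.1 hi).1 (mem_Icc.1 hi).2) hτ.le
      _ = C / τ2 * n * (i : ℝ) ^ (-α) := by ring
  have hsum : ∑ i ∈ Icc 1 n, b i ≤ K * (n : ℝ) ^ (1 / α) :=
    sum_Icc_le_mul_rpow_inv hα (by positivity) (by positivity) hn hbσ hbC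
  have hsq : ∑ i ∈ Icc 1 n, b i ^ 2 ≤ 1 / σ2 * ∑ i ∈ Icc 1 n, b i := sum_sq_le_mul_sum hb0 hbσ
  have hKn : 0 ≤ K * (n : ℝ) ^ (1 / α) := by positivity
  have hσKn : 0 ≤ 1 / σ2 * (K * (n : ℝ) ^ (1 / α)) := by positivity
  refine ⟨hsum.trans ?_, hsq.trans ((mul_le_mul_of_nonneg_left hsum (by positivity)).trans ?_)⟩
  <;> linarith
end

section
/- Let $W_1, W_2, \ldots$ be i.i.d. standard normal random variables and, for each $n$, let $b_{n1}, \ldots, b_{nn}$ be nonnegative reals bounded by a constant $M$, with $\sum_{i=1}^n b_{ni} \ge \delta n^{\gamma}$ for some $\delta, \gamma > 0$ and all large $n$. Then $\frac{\sum_{i=1}^n b_{ni}(W_i^2 - 1)}{\sum_{i=1}^n b_{ni}} \to 0$ almost surely as $n \to \infty$. -/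
/-! For `|s| ≤ 1/4` the moment generating function `e^{-s} (1 - 2s)^{-1/2}` of `W² - 1` is at
most `e^{4s²}`. With weights in `[0, M]` and row sum `B`, Chernoff's method applied to the
independent summands at a small fixed `t` bounds `P(|∑ bᵢ (Wᵢ² - 1)| ≥ ε B)` by `2 e^{-κ B}`,
with `κ > 0` depending only on `ε` and `M`. Since `B_n ≥ δ n^γ`, these probabilities are summable
and Borel–Cantelli gives almost sure convergence. -/

open MeasureTheory ProbabilityTheory Filter Finset
open Real
open scoped Topology

theorem mgf_sq_gaussianReal {s : ℝ} (hs : s < 1 / 2) :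
    mgf (fun x => x ^ 2) (gaussianReal 0 1) s = (√(1 - 2 * s))⁻¹ := by
  have hdensity : ∀ x : ℝ, gaussianPDFReal 0 1 x • exp (s * x ^ 2)
      = (√(2 * π))⁻¹ * exp (-(1 / 2 - s) * x ^ 2) := by
    intro x
    rw [gaussianPDFReal, smul_eq_mul, mul_assoc, ← exp_add, NNReal.coe_one, mul_one]
    congr 2
    ring
  rw [mgf, integral_gaussianReal_eq_integral_smul one_ne_zero]
  simp_rw [hdensity]
  rw [integral_const_mul, integral_gaussian, ← sqrt_inv, ← sqrt_mul (by positivity), ← sqrt_inv]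
  congr 1
  have : 1 - 2 * s ≠ 0 := by linarith
  field_simp

theorem exp_neg_mul_inv_sqrt_one_sub_two_mul_le {s : ℝ} (hs : |s| ≤ 1 / 4) :
    exp (-s) * (√(1 - 2 * s))⁻¹ ≤ exp (4 * s ^ 2) := by
  obtain ⟨hs₁, hs₂⟩ := abs_le.mp hs
  -- `1 + x ≤ exp x` at `x = 2s + 8s²`, and `(1 - 2s)(1 + 2s + 8s²) = 1 + 4s²(1 - 4s) ≥ 1`
  have hsq : exp (-(2 * s + 8 * s ^ 2)) ≤ 1 - 2 * s := by
    rw [exp_neg, inv_le_iff_one_le_mul₀ (exp_pos _)]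
    calc (1 : ℝ) ≤ (1 - 2 * s) * (2 * s + 8 * s ^ 2 + 1) := by nlinarith
      _ ≤ (1 - 2 * s) * exp (2 * s + 8 * s ^ 2) := by
        gcongr
        · linarith
        · exact add_one_le_exp _
  have hsqrt : exp (-s - 4 * s ^ 2) ≤ √(1 - 2 * s) := by
    rw [show -s - 4 * s ^ 2 = -(2 * s + 8 * s ^ 2) / 2 by ring, exp_half]
    exact sqrt_le_sqrt hsq
  calc exp (-s) * (√(1 - 2 * s))⁻¹ ≤ exp (-s) * (exp (-s - 4 * s ^ 2))⁻¹ := by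
        gcongr
    _ = exp (4 * s ^ 2) := by rw [← exp_neg, ← exp_add]; ring_nf

section GaussianSquare

variable {Ω : Type*} [MeasurableSpace Ω] {μ : Measure Ω} {X : Ω → ℝ}

theorem mgf_sq_sub_one_of_map_eq_gaussianReal (hX : Measurable X)
    (hlaw : μ.map X = gaussianReal 0 1) {s : ℝ} (hs : s < 1 / 2) :
    mgf (fun ω => X ω ^ 2 - 1) μ s = exp (-s) * (√(1 - 2 * s))⁻¹ := by
  have hmap : mgf (fun ω => X ω ^ 2 - 1) μ s = mgf (fun x => x ^ 2 + -1) (μ.map X) s := by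
    rw [mgf_map hX.aemeasurable (by fun_prop)]
    rfl
  rw [hmap, hlaw, mgf_add_const, mgf_sq_gaussianReal hs, mul_neg_one, mul_comm]

theorem integrable_exp_mul_const_mul_sq_sub_one [NeZero μ] (hX : Measurable X)
    (hlaw : μ.map X = gaussianReal 0 1) {c u : ℝ} (hcu : c * u < 1 / 2) :
    Integrable (fun ω => exp (u * (c * (X ω ^ 2 - 1)))) μ := by
  have h2 : 0 < 1 - 2 * (c * u) := by linarith
  apply mgf_pos_iff.mp
  rw [mgf_const_mul, mgf_sq_sub_one_of_map_eq_gaussianReal hX hlaw hcu]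
  positivity

theorem mgf_const_mul_sq_sub_one_le (hX : Measurable X) (hlaw : μ.map X = gaussianReal 0 1)
    {c M u : ℝ} (hc : 0 ≤ c) (hcM : c ≤ M) (hu : |u| * M ≤ 1 / 4) :
    mgf (fun ω => c * (X ω ^ 2 - 1)) μ u ≤ exp (4 * M * c * u ^ 2) := by
  have hcu : |c * u| ≤ 1 / 4 := by
    rw [abs_mul, abs_of_nonneg hc, mul_comm]
    exact (mul_le_mul_of_nonneg_left hcM (abs_nonneg u)).trans hu
  rw [mgf_const_mul, mgf_sq_sub_one_of_map_eq_gaussianReal hX hlaw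
    (by linarith [le_abs_self (c * u)])]
  refine (exp_neg_mul_inv_sqrt_one_sub_two_mul_le hcu).trans (exp_le_exp.mpr ?_)
  have : c ^ 2 ≤ M * c := by nlinarith
  nlinarith [sq_nonneg u]

end GaussianSquare

section Chernoff

variable {Ω : Type*} [MeasurableSpace Ω] {μ : Measure Ω}

theorem measureReal_abs_ge_le_exp_mul_mgf [IsFiniteMeasure μ] {X : Ω → ℝ} {t : ℝ} (ht : 0 ≤ t)
    (h₁ : Integrable (fun ω => exp (t * X ω)) μ) (h₂ : Integrable (fun ω => exp (-t * X ω)) μ)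
    (ε : ℝ) :
    μ.real {ω | ε ≤ |X ω|} ≤ exp (-t * ε) * (mgf X μ t + mgf X μ (-t)) := by
  have hsplit : {ω | ε ≤ |X ω|} ⊆ {ω | ε ≤ X ω} ∪ {ω | X ω ≤ -ε} := fun ω hω => by
    rcases le_abs'.mp (show ε ≤ |X ω| from hω) with h | h
    exacts [Or.inr h, Or.inl h]
  calc μ.real {ω | ε ≤ |X ω|} ≤ μ.real {ω | ε ≤ X ω} + μ.real {ω | X ω ≤ -ε} :=
        (measureReal_mono hsplit).trans (measureReal_union_le _ _)
    _ ≤ exp (-t * ε) * mgf X μ t + exp (-(-t) * -ε) * mgf X μ (-t) :=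
        add_le_add (measure_ge_le_exp_mul_mgf ε ht h₁)
          (measure_le_le_exp_mul_mgf (-ε) (neg_nonpos.mpr ht) h₂)
    _ = exp (-t * ε) * (mgf X μ t + mgf X μ (-t)) := by
        rw [neg_mul_neg]; ring

theorem ProbabilityTheory.iIndepFun.mgf_sum_le {ι : Type*} {Y : ι → Ω → ℝ} (hindep : iIndepFun Y μ)
    (hmeas : ∀ i, Measurable (Y i)) {s : Finset ι} {K : ι → ℝ} {u : ℝ}
    (hmgf : ∀ i ∈ s, mgf (Y i) μ u ≤ exp (K i * u ^ 2)) :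
    mgf (∑ i ∈ s, Y i) μ u ≤ exp (u ^ 2 * ∑ i ∈ s, K i) := by
  rw [hindep.mgf_sum hmeas, mul_sum, exp_sum]
  exact prod_le_prod (fun i _ => mgf_nonneg) fun i hi => (hmgf i hi).trans_eq (by ring_nf)

theorem ProbabilityTheory.iIndepFun.measureReal_abs_sum_ge_le {ι : Type*} {Y : ι → Ω → ℝ}
    (hindep : iIndepFun Y μ) (hmeas : ∀ i, Measurable (Y i)) {s : Finset ι} {K : ι → ℝ}
    {t : ℝ} (ht : 0 ≤ t)
    (hint : ∀ i ∈ s, ∀ u, |u| ≤ t → Integrable (fun ω => exp (u * Y i ω)) μ)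
    (hmgf : ∀ i ∈ s, ∀ u, |u| ≤ t → mgf (Y i) μ u ≤ exp (K i * u ^ 2)) (ε : ℝ) :
    μ.real {ω | ε ≤ |∑ i ∈ s, Y i ω|} ≤ 2 * exp (t ^ 2 * ∑ i ∈ s, K i - t * ε) := by
  have := hindep.isProbabilityMeasure
  have hint_sum : ∀ u, |u| ≤ t → Integrable (fun ω => exp (u * (∑ i ∈ s, Y i) ω)) μ :=
    fun u hu => hindep.integrable_exp_mul_sum hmeas fun i hi => hint i hi u hu
  have hmgf_sum : ∀ u, |u| ≤ t → mgf (∑ i ∈ s, Y i) μ u ≤ exp (u ^ 2 * ∑ i ∈ s, K i) :=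
    fun u hu => hindep.mgf_sum_le hmeas fun i hi => hmgf i hi u hu
  have ht_abs : |t| ≤ t := (abs_of_nonneg ht).le
  have hnt_abs : |-t| ≤ t := (abs_neg t ▸ ht_abs)
  have h := measureReal_abs_ge_le_exp_mul_mgf ht (hint_sum t ht_abs) (hint_sum (-t) hnt_abs) ε
  simp only [Finset.sum_apply] at h
  refine h.trans ?_
  calc exp (-t * ε) * (mgf (∑ i ∈ s, Y i) μ t + mgf (∑ i ∈ s, Y i) μ (-t))
      ≤ exp (-t * ε) * (exp (t ^ 2 * ∑ i ∈ s, K i) + exp ((-t) ^ 2 * ∑ i ∈ s, K i)) := by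
        gcongr
        exacts [hmgf_sum t ht_abs, hmgf_sum (-t) hnt_abs]
    _ = 2 * exp (t ^ 2 * ∑ i ∈ s, K i - t * ε) := by
        rw [neg_sq, sub_eq_add_neg, exp_add, neg_mul]
        ring

end Chernoff

section WeightedChiSquare

variable {Ω ι : Type*} [MeasurableSpace Ω] {μ : Measure Ω} {W : ι → Ω → ℝ}

theorem measureReal_abs_sum_mul_sq_sub_one_ge_le (hWmeas : ∀ i, Measurable (W i))
    (hWindep : iIndepFun W μ) (hWgauss : ∀ i, μ.map (W i) = gaussianReal 0 1)
    {s : Finset ι} {c : ι → ℝ} {M t : ℝ} (hc : ∀ i ∈ s, 0 ≤ c i) (hcM : ∀ i ∈ s, c i ≤ M)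
    (ht : 0 ≤ t) (htM : t * M ≤ 1 / 4) (ε : ℝ) :
    μ.real {ω | ε ≤ |∑ i ∈ s, c i * (W i ω ^ 2 - 1)|}
      ≤ 2 * exp (4 * M * t ^ 2 * ∑ i ∈ s, c i - t * ε) := by
  have := hWindep.isProbabilityMeasure
  have hY : iIndepFun (fun i ω => c i * (W i ω ^ 2 - 1)) μ :=
    hWindep.comp (fun i x => c i * (x ^ 2 - 1)) fun i => by fun_prop
  have hsmall : ∀ i ∈ s, ∀ u, |u| ≤ t → |u| * M ≤ 1 / 4 := fun i hi u hu =>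
    (mul_le_mul_of_nonneg_right hu ((hc i hi).trans (hcM i hi))).trans htM
  have hcu : ∀ i ∈ s, ∀ u, |u| ≤ t → c i * u < 1 / 2 := fun i hi u hu => by
    have := hsmall i hi u hu
    nlinarith [le_abs_self u, hc i hi, hcM i hi, abs_nonneg u]
  have h := hY.measureReal_abs_sum_ge_le (fun i => by fun_prop) ht (K := fun i => 4 * M * c i)
    (fun i hi u hu => integrable_exp_mul_const_mul_sq_sub_one (hWmeas i) (hWgauss i)
      (hcu i hi u hu))
    (fun i hi u hu => mgf_const_mul_sq_sub_one_le (hWmeas i) (hWgauss i) (hc i hi) (hcM i hi)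
      (hsmall i hi u hu)) ε
  rwa [← mul_sum, ← mul_assoc, mul_comm (t ^ 2)] at h

theorem exists_pos_measureReal_abs_div_ge_le (hWmeas : ∀ i, Measurable (W i))
    (hWindep : iIndepFun W μ) (hWgauss : ∀ i, μ.map (W i) = gaussianReal 0 1) (M : ℝ)
    {ε : ℝ} (hε : 0 < ε) :
    ∃ κ > 0, ∀ (s : Finset ι) (c : ι → ℝ), (∀ i ∈ s, 0 ≤ c i) → (∀ i ∈ s, c i ≤ M) →
      μ.real {ω | ε ≤ |(∑ i ∈ s, c i * (W i ω ^ 2 - 1)) / ∑ i ∈ s, c i|}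
        ≤ 2 * exp (-(κ * ∑ i ∈ s, c i)) := by
  have := hWindep.isProbabilityMeasure
  -- `t * M ≤ 1/4` puts `±t` in the range of the mgf bound, and `4 * M * t ≤ ε / 2` lets the
  -- linear term `t * ε * B` of the Chernoff exponent absorb the quadratic one
  set t := min ε 1 / (8 * max M 1) with ht_def
  have ht : 0 < t := by positivity
  have htM : 8 * (t * M) ≤ min ε 1 := by
    calc 8 * (t * M) ≤ 8 * (t * max M 1) := by gcongr; exact le_max_left M 1
      _ = min ε 1 := by rw [ht_def]; field_simp
  refine ⟨t * ε / 2, by positivity, fun s c hc hcM => ?_⟩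
  have hB : 0 ≤ ∑ i ∈ s, c i := sum_nonneg hc
  have hsub : {ω | ε ≤ |(∑ i ∈ s, c i * (W i ω ^ 2 - 1)) / ∑ i ∈ s, c i|}
      ⊆ {ω | ε * ∑ i ∈ s, c i ≤ |∑ i ∈ s, c i * (W i ω ^ 2 - 1)|} := by
    intro ω hω
    rcases hB.eq_or_lt with hzero | hpos
    · simp only [Set.mem_ofPred_eq, ← hzero, div_zero, abs_zero] at hω
      linarith
    · rwa [Set.mem_ofPred_eq, abs_div, abs_of_pos hpos, le_div_iff₀ hpos] at hω
  refine (measureReal_mono hsub).trans <| (measureReal_abs_sum_mul_sq_sub_one_ge_le hWmeas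
    hWindep hWgauss hc hcM ht.le (by linarith [min_le_right ε 1]) _).trans ?_
  gcongr
  nlinarith [mul_nonneg (mul_nonneg ht.le hB) (show 0 ≤ ε - 8 * (t * M) by
    linarith [min_le_left ε 1])]

end WeightedChiSquare

theorem summable_exp_neg_mul_rpow {a γ : ℝ} (ha : 0 < a) (hγ : 0 < γ) :
    Summable fun n : ℕ => exp (-(a * n ^ γ)) := by
  have hlo : (fun n : ℕ => exp (-(a * n ^ γ))) =O[atTop] fun n : ℕ => (n : ℝ) ^ (-2 : ℝ) := by
    have h := ((isLittleO_exp_neg_mul_rpow_atTop ha (-2 / γ)).comp_tendsto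
      ((tendsto_rpow_atTop hγ).comp tendsto_natCast_atTop_atTop)).isBigO
    refine h.congr (fun n => by simp [neg_mul]) fun n => ?_
    simp only [Function.comp_apply]
    rw [← rpow_mul (Nat.cast_nonneg n), mul_div_cancel₀ _ hγ.ne']
  exact summable_of_isBigO_nat (summable_nat_rpow.mpr (by norm_num)) hlo

section BorelCantelli

variable {Ω : Type*} [MeasurableSpace Ω] {μ : Measure Ω} [IsFiniteMeasure μ]

theorem ae_eventually_notMem_of_summable_measureReal {A : ℕ → Set Ω} {f : ℕ → ℝ}
    (hf : Summable f) (hA : ∀ᶠ n in atTop, μ.real (A n) ≤ f n) :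
    ∀ᵐ ω ∂μ, ∀ᶠ n in atTop, ω ∉ A n := by
  have hsum : Summable fun n => μ.real (A n) := hf.of_norm_bounded_eventually_nat <| by
    simpa only [Real.norm_eq_abs, abs_of_nonneg measureReal_nonneg] using hA
  apply ae_eventually_notMem
  have hofReal : ∀ n, μ (A n) = ENNReal.ofReal (μ.real (A n)) := fun n =>
    (ofReal_measureReal).symm
  rw [tsum_congr hofReal, ← ENNReal.ofReal_tsum_of_nonneg (fun n => measureReal_nonneg) hsum]
  exact ENNReal.ofReal_ne_top

theorem ae_tendsto_zero_of_summable_measureReal_abs_ge {X : ℕ → Ω → ℝ}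
    (h : ∀ ε > 0, ∃ f : ℕ → ℝ, Summable f ∧ ∀ᶠ n in atTop, μ.real {ω | ε ≤ |X n ω|} ≤ f n) :
    ∀ᵐ ω ∂μ, Tendsto (fun n => X n ω) atTop (𝓝 0) := by
  have hk : ∀ k : ℕ, ∀ᵐ ω ∂μ, ∀ᶠ n in atTop, |X n ω| < 1 / (k + 1) := fun k => by
    obtain ⟨f, hf, hle⟩ := h _ Nat.one_div_pos_of_nat
    filter_upwards [ae_eventually_notMem_of_summable_measureReal hf hle] with ω hω
    filter_upwards [hω] with n hn using not_le.mp hn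
  filter_upwards [ae_all_iff.mpr hk] with ω hω
  refine NormedAddGroup.tendsto_nhds_zero.mpr fun ε hε => ?_
  obtain ⟨k, hk⟩ := exists_nat_one_div_lt hε
  filter_upwards [hω k] with n hn using (Real.norm_eq_abs _).trans_lt (hn.trans hk)

end BorelCantelli

/-- strong law for weighted centered chi-squared variables:
with bounded nonnegative weights whose row sums grow at least polynomially,
`(∑ bₙᵢ (Wᵢ² - 1)) / (∑ bₙᵢ) → 0` almost surely. -/
theorem stmt15
    {Ω : Type*} [MeasureSpace Ω] [IsProbabilityMeasure (ℙ : Measure Ω)]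
    (W : ℕ → Ω → ℝ)
    (hWmeas : ∀ i, Measurable (W i))
    (hWindep : iIndepFun W ℙ)
    (hWgauss : ∀ i, Measure.map (W i) ℙ = gaussianReal 0 1)
    (b : ℕ → ℕ → ℝ) (hb : ∀ (n i : ℕ), 0 ≤ b n i)
    (M : ℝ) (hM : ∀ (n i : ℕ), b n i ≤ M)
    (δ γ : ℝ) (hδ : 0 < δ) (hγ : 0 < γ)
    (hlb : ∀ᶠ n : ℕ in atTop, δ * (n : ℝ) ^ γ ≤ ∑ i ∈ Finset.Icc 1 n, b n i) :
    ∀ᵐ ω ∂(ℙ : Measure Ω),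
      Tendsto (fun n =>
          (∑ i ∈ Finset.Icc 1 n, b n i * ((W i ω) ^ 2 - 1)) /
            (∑ i ∈ Finset.Icc 1 n, b n i))
        atTop (nhds 0) := by
  refine ae_tendsto_zero_of_summable_measureReal_abs_ge fun ε hε => ?_
  obtain ⟨κ, hκ, htail⟩ := exists_pos_measureReal_abs_div_ge_le hWmeas hWindep hWgauss M hε
  refine ⟨fun n => 2 * exp (-(κ * δ * n ^ γ)),
    (summable_exp_neg_mul_rpow (mul_pos hκ hδ) hγ).mul_left 2, ?_⟩
  filter_upwards [hlb] with n hn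
  refine (htail _ (b n) (fun i _ => hb n i) (fun i _ => hM n i)).trans ?_
  rw [mul_assoc]
  gcongr
end
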